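/- Let x be a nonempty word over {0,1,2} such that the word w_x = 0x02x10x02x0 is square-free. Then the critical points of w_x are exactly the positions p with 2|x|+4 ≤ p ≤ 3|x|+6, so η(w_x) = |x| + 3; consequently η(w_x)/|w_x| = (|x|+3)/(4|x|+8) = 1/4 + 1/|w_x|. -/

import Mathlib

namespace CritFact

/-- A word is square-free if it contains no factor `v ++ v` with `v` nonempty. -/
def SqFree {α : Type*} (w : List α) : Prop :=
  ∀ v : List α, v ≠ [] → ¬ (v ++ v) <:+: w

/-- A position in `w` is an integer `p` with `1 ≤ p < |w|`. -/
def IsPos {α : Type*} (w : List α) (p : ℕ) : Prop :=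
  1 ≤ p ∧ p < w.length

/-- `u` is a repetition word of `w` at position `p` (with `w = x ++ y`, `|x| = p`):
`u` is nonempty, one of `u`, `x` is a suffix of the other, and one of `u`, `y` is a
prefix of the other. -/
def IsRepWord {α : Type*} (w : List α) (p : ℕ) (u : List α) : Prop :=
  u ≠ [] ∧ (u <:+ w.take p ∨ w.take p <:+ u) ∧ (u <+: w.drop p ∨ w.drop p <+: u)

/-- The minimal local period of `w` at position `p`. -/
noncomputable def locPer {α : Type*} (w : List α) (p : ℕ) : ℕ :=
  sInf {n | ∃ u : List α, IsRepWord w p u ∧ u.length = n}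

/-- `q` is a period of `w` if `q > 0` and `w[i] = w[i+q]` whenever both are defined. -/
def HasPeriod {α : Type*} (w : List α) (q : ℕ) : Prop :=
  0 < q ∧ ∀ i : ℕ, i + q < w.length → w[i]? = w[i + q]?

/-- The minimal period of `w`. -/
noncomputable def per {α : Type*} (w : List α) : ℕ :=
  sInf {q | HasPeriod w q}

/-- A position `p` of `w` is critical if the minimal local period at `p` equals
the global period of `w`. -/
def IsCritical {α : Type*} (w : List α) (p : ℕ) : Prop :=
  IsPos w p ∧ locPer w p = per w

open Classical in
/-- `eta w` is the number of critical positions of `w`. -/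
noncomputable def eta {α : Type*} (w : List α) : ℕ :=
  ((Finset.Ico 1 w.length).filter (fun p => IsCritical w p)).card

/-- A word is unbordered if no nonempty proper prefix is also a suffix. -/
def Unbordered {α : Type*} (w : List α) : Prop :=
  ∀ v : List α, v ≠ [] → v ≠ w → ¬ (v <+: w ∧ v <:+ w)

/-- Ternary words. -/
abbrev Word := List (Fin 3)

/-- Thue's morphism `τ(0) = 012`, `τ(1) = 02`, `τ(2) = 1`. -/
def tau (a : Fin 3) : Word :=
  if a = 0 then [0, 1, 2] else if a = 1 then [0, 2] else [1]

/-- The morphism `τ` applied to a word. -/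
def tauW (w : Word) : Word := (w.map tau).flatten

/-- The infinite fixed point `m = 012021012102012⋯` of `τ` starting with `0`. -/
def mInf (n : ℕ) : Fin 3 := (tauW^[n + 1] [0]).getD n 0

/-- `u` is a (finite) factor of the infinite word `m`. -/
def FactorOfM (u : Word) : Prop :=
  ∃ i : ℕ, u = (List.range u.length).map (fun j => mInf (i + j))

/-- `u` is a factor of `m` occurring (starting) after position `i₀`. -/
def FactorOfMAfter (u : Word) (i₀ : ℕ) : Prop :=
  ∃ i : ℕ, i₀ ≤ i ∧ u = (List.range u.length).map (fun j => mInf (i + j))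

/-- `mWord n = τ^{2n-1}(0) · τ^{2n-3}(0) ⋯ τ³(0) · τ(0)`. -/
def mWord : ℕ → Word
  | 0 => []
  | n + 1 => tauW^[2 * n + 1] [0] ++ mWord n

/-- The word `w_x = 0x02x10x02x0`. -/
def wx (x : Word) : Word :=
  [0] ++ x ++ [0, 2] ++ x ++ [1, 0] ++ x ++ [0, 2] ++ x ++ [0]

end CritFact

/-!
Write `n = |x|`. Square-freeness of `w_x` pins down the ends of `x`: it begins with `120`,
ends with `2012`, and `n ≥ 9`. So `w_x` begins and ends with `0120` and has period `4n + 4`;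
shorter periods produce squares, either directly or after comparing with these forced letters.

A repetition word of length `m` at `p` exists exactly when `w[i] = w[i + m]` on the window
`p - m ≤ i < p` (a local period). As `w_x = v 1 v 0` with `v = 0x02x`, every `p ≤ 2n + 3` has
local period `2n + 4`, and every `p ≥ 3n + 7` has local period `n + 2`, since `w_x` ends with
`x 0 2 x 0`. For `2n + 4 ≤ p ≤ 3n + 6`, a local period `m < 4n + 4` would either give a square
centred at `p`, or a global period, or move the last copy of `x` onto another occurrence of
`x`; but `x` occurs in `w_x` only at its four obvious places.
-/

namespace CritFact

section General

variable {α : Type*} {w u : List α} {p m q : ℕ}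

theorem SqFree.infix (hsf : SqFree w) (hu : u <:+: w) : SqFree u :=
  fun v hv hvu => hsf v hv (hvu.trans hu)

theorem SqFree.not_forall_getElem?_eq (hsf : SqFree w) {a d : ℕ} (hd : 0 < d)
    (hlen : a + 2 * d ≤ w.length) : ¬ ∀ s < d, w[a + s]? = w[a + d + s]? := by
  intro h
  have hhalf : ((w.drop a).drop d).take d = (w.drop a).take d := by
    apply List.ext_getElem?
    intro s
    by_cases hs : s < d
    · simp only [List.getElem?_take_of_lt hs, List.getElem?_drop]
      rw [h s hs, Nat.add_assoc]
    · simp [hs]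
  refine hsf ((w.drop a).take d) (by simp; omega) ?_
  rw [show (w.drop a).take d ++ (w.drop a).take d = (w.drop a).take (d + d) by
    rw [List.take_add, hhalf]]
  exact (List.take_prefix _ _).isInfix.trans (List.drop_suffix _ _).isInfix

def OccursAt (w u : List α) (t : ℕ) : Prop :=
  ∀ j < u.length, w[t + j]? = u[j]?

theorem OccursAt.add_length_le {t : ℕ} (h : OccursAt w u t) (hu : u ≠ []) :
    t + u.length ≤ w.length := by
  have hpos := List.length_pos_iff.mpr hu
  have hlast := (h (u.length - 1) (by omega)).trans (List.getElem?_eq_getElem (by omega))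
  have := (List.getElem?_eq_some_iff.mp hlast).1
  omega

theorem SqFree.not_occursAt_append_self {v : List α} {t : ℕ} (hsf : SqFree w) (hv : v ≠ []) :
    ¬ OccursAt w (v ++ v) t := by
  intro h
  have hlen := h.add_length_le (by simp [hv])
  have hpos := List.length_pos_iff.mpr hv
  simp only [List.length_append] at hlen
  refine hsf.not_forall_getElem?_eq hpos (a := t) (by omega) fun s hs => ?_
  rw [h s (by simp; omega), Nat.add_assoc, h _ (by simp; omega),
    List.getElem?_append_left hs, List.getElem?_append_right (by omega), Nat.add_sub_cancel_left]

theorem SqFree.ne_of_adjacent {a b : α} {i : ℕ} (hsf : SqFree w) (ha : w[i]? = some a)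
    (hb : w[i + 1]? = some b) : a ≠ b := by
  rintro rfl
  refine hsf.not_occursAt_append_self (v := [a]) (t := i) (by simp) fun j hj => ?_
  obtain rfl | rfl : j = 0 ∨ j = 1 := by simp at hj; omega
  exacts [ha, hb]

theorem SqFree.eq_of_occursAt {t t' : ℕ} (hsf : SqFree w) (h : OccursAt w u t)
    (h' : OccursAt w u t') (hu : u ≠ []) (h₁ : t ≤ t' + u.length)
    (h₂ : t' ≤ t + u.length) :
    t = t' := by
  wlog hle : t ≤ t' generalizing t t'
  · exact (this h' h h₂ h₁ (by omega)).symm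
  by_contra hne
  have hend := h'.add_length_le hu
  exact hsf.not_forall_getElem?_eq (a := t) (d := t' - t) (by omega) (by omega) fun s hs => by
    rw [h s (by omega), show t + (t' - t) + s = t' + s by omega, h' s (by omega)]

/-- `p - m` truncates at `0`: for `m ≥ p` the window covers all of `w.take p`, which is the case
of a repetition word having `w.take p` as a suffix. -/
def IsLocalPeriod (w : List α) (p m : ℕ) : Prop :=
  0 < m ∧ ∀ i, p - m ≤ i → i < p → i + m < w.length → w[i]? = w[i + m]?

theorem getElem?_eq_of_suffix_or_suffix {l : List α} (h : u <:+ l ∨ l <:+ u) {i : ℕ}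
    (hi : i < l.length) (hu : l.length ≤ i + u.length) :
    l[i]? = u[i + u.length - l.length]? := by
  rcases h with ⟨t, rfl⟩ | ⟨t, rfl⟩
  · simp only [List.length_append] at hi hu ⊢
    rw [List.getElem?_append_right (by omega)]
    congr 1; omega
  · simp only [List.length_append]
    rw [List.getElem?_append_right (by omega)]
    congr 1; omega

theorem getElem?_eq_of_prefix_or_prefix {l : List α} (h : u <+: l ∨ l <+: u) {i : ℕ}
    (hi : i < l.length) (hu : i < u.length) : l[i]? = u[i]? := by
  rcases h with ⟨t, rfl⟩ | ⟨t, rfl⟩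
  · exact List.getElem?_append_left hu
  · exact (List.getElem?_append_left hi).symm

theorem IsRepWord.isLocalPeriod (h : IsRepWord w p u) (hp : p ≤ w.length) :
    IsLocalPeriod w p u.length := by
  obtain ⟨hne, hleft, hright⟩ := h
  refine ⟨List.length_pos_iff.mpr hne, fun i hi hip him => ?_⟩
  have hl := getElem?_eq_of_suffix_or_suffix hleft (i := i) (by simp; omega) (by simp; omega)
  have hr := getElem?_eq_of_prefix_or_prefix hright (i := i + u.length - p) (by simp; omega)
    (by omega)
  rw [List.getElem?_take_of_lt hip, List.length_take_of_le hp] at hl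
  rw [List.getElem?_drop, show p + (i + u.length - p) = i + u.length by omega] at hr
  rw [hl, hr]

theorem IsLocalPeriod.exists_isRepWord [Inhabited α] (h : IsLocalPeriod w p m)
    (hp : p ≤ w.length) : ∃ u, IsRepWord w p u ∧ u.length = m := by
  -- read `u` off `w.take p` right-aligned where possible, and off `w.drop p` otherwise;
  -- `default` only fills the gap between them when `m > |w|`
  set u : List α := (List.range m).map fun j =>
    if m ≤ j + p then w.getD (j + p - m) default else w.getD (p + j) default
  have hlen : u.length = m := by simp [u]
  have hu_left : ∀ j < m, m ≤ j + p → u[j]? = w[j + p - m]? := by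
    intro j hj hjp
    simp [u, hj, hjp, List.getElem?_eq_getElem (show j + p - m < w.length by omega)]
  have hu_right : ∀ j < m, p + j < w.length → u[j]? = w[p + j]? := by
    intro j hj hpj
    by_cases hjp : m ≤ j + p
    · rw [hu_left j hj hjp, h.2 _ (by omega) (by omega) (by omega)]
      congr 1; omega
    · simp [u, hj, hjp, List.getElem?_eq_getElem hpj]
  refine ⟨u, ⟨List.ne_nil_of_length_pos (hlen ▸ h.1), ?_, ?_⟩, hlen⟩
  · rcases le_total m p with hmp | hpm
    · refine Or.inl (List.suffix_iff_getElem?.mpr ⟨by simp; omega, fun j hj => ?_⟩)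
      rw [← List.getElem?_eq_getElem, List.getElem?_take_of_lt (by simp at hj ⊢; omega),
        hu_left j (by omega) (by omega)]
      congr 1; simp; omega
    · refine Or.inr (List.suffix_iff_getElem?.mpr ⟨by simp; omega, fun j hj => ?_⟩)
      rw [List.length_take_of_le hp] at hj ⊢
      rw [← List.getElem?_eq_getElem, hu_left _ (by omega) (by omega),
        List.getElem?_take_of_lt (by omega)]
      congr 1; omega
  · rcases le_total m (w.length - p) with hmp | hpm
    · refine Or.inl (List.prefix_iff_getElem?.mpr fun j hj => ?_)
      rw [← List.getElem?_eq_getElem, hu_right j (by omega) (by omega), List.getElem?_drop]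
    · refine Or.inr (List.prefix_iff_getElem?.mpr fun j hj => ?_)
      simp only [List.length_drop] at hj
      rw [← List.getElem?_eq_getElem, hu_right j (by omega) (by omega), List.getElem?_drop]

theorem HasPeriod.isLocalPeriod (h : HasPeriod w q) (p : ℕ) : IsLocalPeriod w p q :=
  ⟨h.1, fun i _ _ hi => h.2 i hi⟩

theorem IsLocalPeriod.hasPeriod (h : IsLocalPeriod w p m) (hpm : p ≤ m)
    (hlen : w.length ≤ p + m) : HasPeriod w m :=
  ⟨h.1, fun i hi => h.2 i (by omega) (by omega) hi⟩

theorem IsLocalPeriod.occursAt_sub {t : ℕ} (h : IsLocalPeriod w p m) (hu : OccursAt w u t)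
    (hpt : p ≤ t) (hmt : m ≤ t) (hwin : t + u.length ≤ p + m)
    (hlen : t + u.length ≤ w.length) :
    OccursAt w u (t - m) := fun j hj => by
  rw [h.2 _ (by omega) (by omega) (by omega), show t - m + j + m = t + j by omega, hu j hj]

theorem SqFree.not_isLocalPeriod (hsf : SqFree w) (h : IsLocalPeriod w p m) (hmp : m ≤ p)
    (hpm : p + m ≤ w.length) : False :=
  hsf.not_forall_getElem?_eq h.1 (a := p - m) (by omega) fun s hs => by
    rw [show p - m + m + s = p - m + s + m by omega]
    exact h.2 _ (by omega) (by omega) (by omega)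

theorem hasPeriod_per (hw : w ≠ []) : HasPeriod w (per w) :=
  Nat.sInf_mem (s := {q | HasPeriod w q})
    ⟨w.length, List.length_pos_iff.mpr hw, fun _ hi => by omega⟩

theorem per_eq (h : HasPeriod w q) (hmin : ∀ r < q, ¬ HasPeriod w r) : per w = q :=
  le_antisymm (Nat.sInf_le h)
    (not_lt.mp fun hlt => hmin _ hlt (Nat.sInf_mem (s := {r | HasPeriod w r}) ⟨q, h⟩))

theorem locPer_eq_sInf [Inhabited α] (hp : p ≤ w.length) :
    locPer w p = sInf {m | IsLocalPeriod w p m} := by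
  unfold locPer
  congr 1
  ext m
  exact ⟨fun ⟨u, hu, hm⟩ => hm ▸ hu.isLocalPeriod hp, fun h => h.exists_isRepWord hp⟩

theorem isCritical_iff [Inhabited α] (hp : IsPos w p) :
    IsCritical w p ↔ ∀ m, IsLocalPeriod w p m → per w ≤ m := by
  have hper : IsLocalPeriod w p (per w) :=
    (hasPeriod_per (List.ne_nil_of_length_pos (by have := hp.2; omega))).isLocalPeriod p
  rw [IsCritical, locPer_eq_sInf hp.2.le, and_iff_right hp]
  exact ⟨fun h m hm => h ▸ Nat.sInf_le hm,
    fun h => le_antisymm (Nat.sInf_le hper)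
      (h _ (Nat.sInf_mem (s := {m | IsLocalPeriod w p m}) ⟨_, hper⟩))⟩

theorem eta_eq_of_isCritical_iff {a b : ℕ}
    (h : ∀ p, IsPos w p → (IsCritical w p ↔ a ≤ p ∧ p ≤ b)) (ha : 1 ≤ a)
    (hb : b < w.length) :
    eta w = b + 1 - a := by
  rw [eta, ← Nat.card_Icc]
  congr 1
  ext p
  simp only [Finset.mem_filter, Finset.mem_Ico, Finset.mem_Icc]
  exact ⟨fun ⟨hp, hc⟩ => (h p hp).mp hc,
    fun hp => ⟨⟨by omega, by omega⟩, (h p ⟨by omega, by omega⟩).mpr hp⟩⟩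

end General

section Wx

variable {x : Word} {i j : ℕ}

theorem wx_eq (x : Word) :
    wx x = [0] ++ (x ++ ([0, 2] ++ (x ++ ([1, 0] ++ (x ++ ([0, 2] ++ (x ++ [0]))))))) := by
  simp [wx]

theorem length_wx (x : Word) : (wx x).length = 4 * x.length + 8 := by
  simp [wx]; omega

theorem wx_getElem?_copy (k : ℕ) (hk : k < 4) (hj : j < x.length)
    (hi : i = 1 + k * (x.length + 2) + j) : (wx x)[i]? = x[j]? := by
  subst hi
  interval_cases k <;>
  · simp (disch := (simp only [List.length_append, List.length_cons, List.length_nil]; omega)) only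
      [wx_eq, List.getElem?_append_left, List.getElem?_append_right]
    congr 1; simp only [List.length_cons, List.length_nil]; omega

theorem wx_getElem?_eq_zero
    (hi : i = 0 ∨ i = x.length + 1 ∨ i = 2 * x.length + 4 ∨ i = 3 * x.length + 5 ∨
      i = 4 * x.length + 7) : (wx x)[i]? = some 0 := by
  rcases hi with rfl | rfl | rfl | rfl | rfl <;>
  · simp (disch := (simp only [List.length_append, List.length_cons, List.length_nil]; omega)) only
      [wx_eq, List.getElem?_append_left, List.getElem?_append_right]
    simp only [List.getElem?_cons, List.length_cons, List.length_nil, List.getElem?_nil]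
    split_ifs <;> first | rfl | omega

theorem wx_getElem?_eq_one (hi : i = 2 * x.length + 3) : (wx x)[i]? = some 1 := by
  subst hi
  simp (disch := (simp only [List.length_append, List.length_cons, List.length_nil]; omega)) only
    [wx_eq, List.getElem?_append_left, List.getElem?_append_right]
  simp only [List.getElem?_cons, List.length_cons, List.length_nil, List.getElem?_nil]
  split_ifs <;> first | rfl | omega

theorem wx_getElem?_eq_two (hi : i = x.length + 2 ∨ i = 3 * x.length + 6) :
    (wx x)[i]? = some 2 := by
  rcases hi with rfl | rfl <;>
  · simp (disch := (simp only [List.length_append, List.length_cons, List.length_nil]; omega)) only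
      [wx_eq, List.getElem?_append_left, List.getElem?_append_right]
    simp only [List.getElem?_cons, List.length_cons, List.length_nil, List.getElem?_nil]
    split_ifs <;> first | rfl | omega

theorem occursAt_wx (k : ℕ) (hk : k < 4) : OccursAt (wx x) x (1 + k * (x.length + 2)) :=
  fun _ hj => wx_getElem?_copy k hk hj rfl

theorem x_infix_wx (x : Word) : x <:+: wx x :=
  ⟨[0], [0, 2] ++ x ++ [1, 0] ++ x ++ [0, 2] ++ x ++ [0], by simp [wx]⟩

theorem wx_getElem?_add_half (hj : j ≤ 2 * x.length + 2) :
    (wx x)[j + (2 * x.length + 4)]? = (wx x)[j]? := by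
  rcases (by omega : j = 0 ∨ (1 ≤ j ∧ j ≤ x.length) ∨ j = x.length + 1 ∨
      j = x.length + 2 ∨ x.length + 3 ≤ j) with rfl | hj' | rfl | rfl | hj'
  · rw [wx_getElem?_eq_zero (by omega), wx_getElem?_eq_zero (by omega)]
  · exact (wx_getElem?_copy 2 (j := j - 1) (by omega) (by omega) (by omega)).trans
      (wx_getElem?_copy 0 (by omega) (by omega) (by omega)).symm
  · rw [wx_getElem?_eq_zero (by omega), wx_getElem?_eq_zero (by omega)]
  · rw [wx_getElem?_eq_two (by omega), wx_getElem?_eq_two (by omega)]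
  · exact (wx_getElem?_copy 3 (j := j - x.length - 3) (by omega) (by omega) (by omega)).trans
      (wx_getElem?_copy 1 (by omega) (by omega) (by omega)).symm

theorem isLocalPeriod_wx_of_le {p : ℕ} (hp : p ≤ 2 * x.length + 3) :
    IsLocalPeriod (wx x) p (2 * x.length + 4) :=
  ⟨by omega, fun i _ hi _ => (wx_getElem?_add_half (by omega)).symm⟩

theorem isLocalPeriod_wx_of_ge {p : ℕ} (hp : 3 * x.length + 7 ≤ p) :
    IsLocalPeriod (wx x) p (x.length + 2) := by
  refine ⟨by omega, fun i hi _ hlen => ?_⟩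
  rw [length_wx] at hlen
  rcases (by omega : i < 3 * x.length + 5 ∨ i = 3 * x.length + 5) with hi' | rfl
  · exact (wx_getElem?_copy 2 (j := i - (2 * x.length + 5)) (by omega) (by omega) (by omega)).trans
      (wx_getElem?_copy 3 (by omega) (by omega) (by omega)).symm
  · rw [wx_getElem?_eq_zero (by omega), wx_getElem?_eq_zero (by omega)]

end Wx

section ForcedLetters

variable {x : Word}

theorem x_getElem?_zero (hsf : SqFree (wx x)) (hx : 0 < x.length) : x[0]? = some 1 := by
  obtain ⟨a, ha⟩ : ∃ a, x[0]? = some a := ⟨_, List.getElem?_eq_getElem hx⟩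
  have h0 : 0 ≠ a := hsf.ne_of_adjacent (wx_getElem?_eq_zero (i := 0) (by omega))
    ((wx_getElem?_copy 0 (by omega) hx (by omega)).trans ha)
  have h2 : 2 ≠ a := hsf.ne_of_adjacent (wx_getElem?_eq_two (i := x.length + 2) (by omega))
    ((wx_getElem?_copy 1 (by omega) hx (by omega)).trans ha)
  rw [ha, Option.some_inj]; omega

theorem x_getElem?_last (hsf : SqFree (wx x)) (hx : 0 < x.length) :
    x[x.length - 1]? = some 2 := by
  obtain ⟨a, ha⟩ : ∃ a, x[x.length - 1]? = some a :=
    ⟨_, List.getElem?_eq_getElem (by omega)⟩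
  have h0 : a ≠ 0 := hsf.ne_of_adjacent (i := x.length)
    ((wx_getElem?_copy 0 (by omega) (by omega) (by omega)).trans ha)
    (wx_getElem?_eq_zero (by omega))
  have h1 : a ≠ 1 := hsf.ne_of_adjacent (i := 2 * x.length + 2)
    ((wx_getElem?_copy 1 (by omega) (by omega) (by omega)).trans ha)
    (wx_getElem?_eq_one (by omega))
  rw [ha, Option.some_inj]; omega

theorem x_getElem?_one (hsf : SqFree (wx x)) (hx : 1 < x.length) : x[1]? = some 2 := by
  obtain ⟨a, ha⟩ : ∃ a, x[1]? = some a := ⟨_, List.getElem?_eq_getElem hx⟩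
  have hx₀ := x_getElem?_zero hsf (by omega)
  have h1 : 1 ≠ a := hsf.ne_of_adjacent (i := 1)
    ((wx_getElem?_copy 0 (by omega) (by omega) (by omega)).trans hx₀)
    ((wx_getElem?_copy 0 (by omega) hx (by omega)).trans ha)
  have h0 : a ≠ 0 := by
    rintro rfl
    refine hsf.not_occursAt_append_self (v := [1, 0]) (t := 2 * x.length + 3) (by simp)
      fun j hj => ?_
    simp only [List.length_append, List.length_cons, List.length_nil] at hj
    interval_cases j
    · exact wx_getElem?_eq_one (by omega)
    · exact wx_getElem?_eq_zero (by omega)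
    · exact (wx_getElem?_copy 2 (by omega) (by omega) (by omega)).trans hx₀
    · exact (wx_getElem?_copy 2 (by omega) (by omega) (by omega)).trans ha
  rw [ha, Option.some_inj]; omega

theorem x_getElem?_sub_two (hsf : SqFree (wx x)) (hx : 1 < x.length) :
    x[x.length - 2]? = some 1 := by
  obtain ⟨a, ha⟩ : ∃ a, x[x.length - 2]? = some a :=
    ⟨_, List.getElem?_eq_getElem (by omega)⟩
  have hx₁ := x_getElem?_last hsf (by omega)
  have h2 : a ≠ 2 := hsf.ne_of_adjacent (i := 2 * x.length + 1)
    ((wx_getElem?_copy 1 (by omega) (by omega) (by omega)).trans ha)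
    ((wx_getElem?_copy 1 (by omega) (by omega) (by omega)).trans hx₁)
  have h0 : a ≠ 0 := by
    rintro rfl
    refine hsf.not_occursAt_append_self (v := [0, 2]) (t := 3 * x.length + 3) (by simp)
      fun j hj => ?_
    simp only [List.length_append, List.length_cons, List.length_nil] at hj
    interval_cases j
    · exact (wx_getElem?_copy 2 (by omega) (by omega) (by omega)).trans ha
    · exact (wx_getElem?_copy 2 (by omega) (by omega) (by omega)).trans hx₁
    · exact wx_getElem?_eq_zero (by omega)
    · exact wx_getElem?_eq_two (by omega)
  rw [ha, Option.some_inj]; omega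

theorem x_getElem?_two (hsf : SqFree (wx x)) (hx : 2 < x.length) : x[2]? = some 0 := by
  obtain ⟨a, ha⟩ : ∃ a, x[2]? = some a := ⟨_, List.getElem?_eq_getElem hx⟩
  have hx₀ := x_getElem?_zero hsf (by omega)
  have hx₁ := x_getElem?_one hsf (by omega)
  have h2 : 2 ≠ a := hsf.ne_of_adjacent (i := 2)
    ((wx_getElem?_copy 0 (by omega) (by omega) (by omega)).trans hx₁)
    ((wx_getElem?_copy 0 (by omega) hx (by omega)).trans ha)
  have h1 : a ≠ 1 := by
    rintro rfl
    refine hsf.not_occursAt_append_self (v := [2, 1]) (t := x.length + 2) (by simp)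
      fun j hj => ?_
    simp only [List.length_append, List.length_cons, List.length_nil] at hj
    interval_cases j
    · exact wx_getElem?_eq_two (by omega)
    · exact (wx_getElem?_copy 1 (by omega) (by omega) (by omega)).trans hx₀
    · exact (wx_getElem?_copy 1 (by omega) (by omega) (by omega)).trans hx₁
    · exact (wx_getElem?_copy 1 (by omega) (by omega) (by omega)).trans ha
  rw [ha, Option.some_inj]; omega

theorem x_getElem?_sub_three (hsf : SqFree (wx x)) (hx : 2 < x.length) :
    x[x.length - 3]? = some 0 := by
  obtain ⟨a, ha⟩ : ∃ a, x[x.length - 3]? = some a :=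
    ⟨_, List.getElem?_eq_getElem (by omega)⟩
  have hx₁ := x_getElem?_last hsf (by omega)
  have hx₂ := x_getElem?_sub_two hsf (by omega)
  have h1 : a ≠ 1 := hsf.ne_of_adjacent (i := 2 * x.length)
    ((wx_getElem?_copy 1 (by omega) (by omega) (by omega)).trans ha)
    ((wx_getElem?_copy 1 (by omega) (by omega) (by omega)).trans hx₂)
  have h2 : a ≠ 2 := by
    rintro rfl
    refine hsf.not_occursAt_append_self (v := [2, 1]) (t := 2 * x.length) (by simp)
      fun j hj => ?_
    simp only [List.length_append, List.length_cons, List.length_nil] at hj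
    interval_cases j
    · exact (wx_getElem?_copy 1 (by omega) (by omega) (by omega)).trans ha
    · exact (wx_getElem?_copy 1 (by omega) (by omega) (by omega)).trans hx₂
    · exact (wx_getElem?_copy 1 (by omega) (by omega) (by omega)).trans hx₁
    · exact wx_getElem?_eq_one (by omega)
  rw [ha, Option.some_inj]; omega

theorem x_getElem?_sub_four (hsf : SqFree (wx x)) (hx : 3 < x.length) :
    x[x.length - 4]? = some 2 := by
  obtain ⟨a, ha⟩ : ∃ a, x[x.length - 4]? = some a :=
    ⟨_, List.getElem?_eq_getElem (by omega)⟩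
  have hx₀ := x_getElem?_zero hsf (by omega)
  have hx₁ := x_getElem?_one hsf (by omega)
  have hy₁ := x_getElem?_last hsf (by omega)
  have hy₂ := x_getElem?_sub_two hsf (by omega)
  have hy₃ := x_getElem?_sub_three hsf (by omega)
  have h0 : a ≠ 0 := hsf.ne_of_adjacent (i := 2 * x.length - 1)
    ((wx_getElem?_copy 1 (by omega) (by omega) (by omega)).trans ha)
    ((wx_getElem?_copy 1 (by omega) (by omega) (by omega)).trans hy₃)
  have h1 : a ≠ 1 := by
    rintro rfl
    refine hsf.not_occursAt_append_self (v := [1, 0, 1, 2]) (t := 2 * x.length - 1) (by simp)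
      fun j hj => ?_
    simp only [List.length_append, List.length_cons, List.length_nil] at hj
    interval_cases j
    · exact (wx_getElem?_copy 1 (by omega) (by omega) (by omega)).trans ha
    · exact (wx_getElem?_copy 1 (by omega) (by omega) (by omega)).trans hy₃
    · exact (wx_getElem?_copy 1 (by omega) (by omega) (by omega)).trans hy₂
    · exact (wx_getElem?_copy 1 (by omega) (by omega) (by omega)).trans hy₁
    · exact wx_getElem?_eq_one (by omega)
    · exact wx_getElem?_eq_zero (by omega)
    · exact (wx_getElem?_copy 2 (by omega) (by omega) (by omega)).trans hx₀
    · exact (wx_getElem?_copy 2 (by omega) (by omega) (by omega)).trans hx₁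
  rw [ha, Option.some_inj]; omega

theorem nine_le_length (hsf : SqFree (wx x)) (hx : x ≠ []) : 9 ≤ x.length := by
  have hpos := List.length_pos_iff.mpr hx
  have h₀ := x_getElem?_zero hsf
  have h₁ := x_getElem?_one hsf
  have h₂ := x_getElem?_two hsf
  have f₁ := x_getElem?_last hsf
  have f₂ := x_getElem?_sub_two hsf
  have f₃ := x_getElem?_sub_three hsf
  have f₄ := x_getElem?_sub_four hsf
  by_contra! hlt
  -- The forced letters either clash or determine `x` (up to `x[3]` when `|x| = 8`), and each
  -- word so determined contains an explicit square.
  interval_cases hn : x.length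
  all_goals norm_num at h₀ h₁ h₂ f₁ f₂ f₃ f₄
  · simp_all
  · obtain rfl : x = [1, 2] := List.ext_getElem hn fun i _ h => by
      simp only [List.length_cons, List.length_nil] at h
      interval_cases i <;> simp_all
    exact hsf [2, 1] (by simp) (by decide)
  · simp_all
  · simp_all
  · obtain rfl : x = [1, 2, 0, 1, 2] := List.ext_getElem hn fun i _ h => by
      simp only [List.length_cons, List.length_nil] at h
      interval_cases i <;> simp_all
    exact hsf [0, 1, 2] (by simp) (by decide)
  · simp_all
  · obtain rfl : x = [1, 2, 0, 2, 0, 1, 2] := List.ext_getElem hn fun i _ h => by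
      simp only [List.length_cons, List.length_nil] at h
      interval_cases i <;> simp_all
    exact hsf [2, 0] (by simp) (by decide)
  · obtain ⟨a, ha⟩ : ∃ a, x[3]? = some a := ⟨_, List.getElem?_eq_getElem (by omega)⟩
    obtain rfl : x = [1, 2, 0, a, 2, 0, 1, 2] := List.ext_getElem hn fun i _ h => by
      simp only [List.length_cons, List.length_nil] at h
      interval_cases i <;> simp_all
    fin_cases a
    · exact hsf [0] (by simp) (by decide)
    · exact hsf [1, 2, 0] (by simp) (by decide)
    · exact hsf [2] (by simp) (by decide)

end ForcedLetters

section Period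

variable {x : Word}

theorem occursAt_wx_0120_start (hsf : SqFree (wx x)) (hx : 2 < x.length) :
    OccursAt (wx x) [0, 1, 2, 0] 0 := fun j hj => by
  simp only [List.length_cons, List.length_nil] at hj
  interval_cases j
  · exact wx_getElem?_eq_zero (by omega)
  · exact (wx_getElem?_copy 0 (by omega) (by omega) (by omega)).trans
      (x_getElem?_zero hsf (by omega))
  · exact (wx_getElem?_copy 0 (by omega) (by omega) (by omega)).trans
      (x_getElem?_one hsf (by omega))
  · exact (wx_getElem?_copy 0 (by omega) (by omega) (by omega)).trans
      (x_getElem?_two hsf (by omega))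

theorem occursAt_wx_0120_end (hsf : SqFree (wx x)) (hx : 2 < x.length) :
    OccursAt (wx x) [0, 1, 2, 0] (4 * x.length + 4) := fun j hj => by
  simp only [List.length_cons, List.length_nil] at hj
  interval_cases j
  · exact (wx_getElem?_copy 3 (by omega) (by omega) (by omega)).trans
      (x_getElem?_sub_three hsf (by omega))
  · exact (wx_getElem?_copy 3 (by omega) (by omega) (by omega)).trans
      (x_getElem?_sub_two hsf (by omega))
  · exact (wx_getElem?_copy 3 (by omega) (by omega) (by omega)).trans
      (x_getElem?_last hsf (by omega))
  · exact wx_getElem?_eq_zero (by omega)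

theorem hasPeriod_wx (hsf : SqFree (wx x)) (hx : 2 < x.length) :
    HasPeriod (wx x) (4 * x.length + 4) := by
  refine ⟨by omega, fun i hi => ?_⟩
  rw [length_wx] at hi
  have h₁ := occursAt_wx_0120_start hsf hx i (by simp; omega)
  have h₂ := occursAt_wx_0120_end hsf hx i (by simp; omega)
  rw [zero_add] at h₁
  rw [h₁, add_comm, h₂]

theorem getElem?_of_hasPeriod_wx {k : ℕ} (hk₀ : 0 < k) (hk : k < x.length)
    (h : HasPeriod (wx x) (3 * x.length + 6 + k)) :
    (∀ t < x.length - k, x[t]? = x[t + k]?) ∧ x[x.length - k]? = some 0 := by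
  refine ⟨fun t ht => ?_, ?_⟩
  · have := h.2 (t + 1) (by rw [length_wx]; omega)
    exact (wx_getElem?_copy 0 (by omega) (by omega) (by omega)).symm.trans
      (this.trans (wx_getElem?_copy 3 (by omega) (by omega) (by omega)))
  · have := h.2 (x.length + 1 - k) (by rw [length_wx]; omega)
    exact (wx_getElem?_copy 0 (by omega) (by omega) (by omega)).symm.trans
      (this.trans (wx_getElem?_eq_zero (by omega)))

theorem not_getElem?_shift (hsf : SqFree (wx x)) {k : ℕ} (hk₃ : 3 ≤ k)
    (hk₄ : k + 4 ≤ x.length) (hzero : x[x.length - k]? = some 0) :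
    ¬ ∀ t < x.length - k, x[t]? = x[t + k]? := by
  intro hshift
  have hsfx : SqFree x := hsf.infix (x_infix_wx x)
  have g₁ : x[x.length - k - 1]? = some 2 := by
    rw [hshift _ (by omega), ← x_getElem?_last hsf (by omega)]; congr 1; omega
  have g₂ : x[x.length - k - 2]? = some 1 := by
    rw [hshift _ (by omega), ← x_getElem?_sub_two hsf (by omega)]; congr 1; omega
  have g₃ : x[x.length - k - 3]? = some 0 := by
    rw [hshift _ (by omega), ← x_getElem?_sub_three hsf (by omega)]; congr 1; omega
  have g₄ : x[x.length - k - 4]? = some 2 := by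
    rw [hshift _ (by omega), ← x_getElem?_sub_four hsf (by omega)]; congr 1; omega
  obtain ⟨b, hb⟩ : ∃ b, x[x.length - k + 1]? = some b :=
    ⟨_, List.getElem?_eq_getElem (by omega)⟩
  have hb₀ : 0 ≠ b := hsfx.ne_of_adjacent hzero hb
  have hb₁ : b ≠ 1 := by
    rintro rfl
    refine hsfx.not_occursAt_append_self (v := [2, 0, 1]) (t := x.length - k - 4) (by simp)
      fun j hj => ?_
    simp only [List.length_append, List.length_cons, List.length_nil] at hj
    interval_cases j
    · simpa using g₄
    · simpa [show x.length - k - 4 + 1 = x.length - k - 3 by omega] using g₃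
    · simpa [show x.length - k - 4 + 2 = x.length - k - 2 by omega] using g₂
    · simpa [show x.length - k - 4 + 3 = x.length - k - 1 by omega] using g₁
    · simpa [show x.length - k - 4 + 4 = x.length - k by omega] using hzero
    · simpa [show x.length - k - 4 + 5 = x.length - k + 1 by omega] using hb
  -- for `b = 2`, the factor `x[k, |x|) 0 2` of `w_x` is followed by `x[0, |x| - k) 0 2`
  have hb₂ : b ≠ 2 := by
    rintro rfl
    refine hsf.not_forall_getElem?_eq (a := k + 1) (d := x.length + 2 - k) (by omega)
      (by rw [length_wx]; omega) fun s hs => ?_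
    rw [show k + 1 + (x.length + 2 - k) + s = x.length + 3 + s by omega]
    rcases (by omega : s < x.length - k ∨ s = x.length - k ∨ s = x.length - k + 1)
      with hs' | rfl | rfl
    · rw [wx_getElem?_copy 0 (j := k + s) (by omega) (by omega) (by omega),
        wx_getElem?_copy 1 (j := s) (by omega) (by omega) (by omega), hshift s hs', add_comm]
    · rw [wx_getElem?_eq_zero (by omega),
        wx_getElem?_copy 1 (j := x.length - k) (by omega) (by omega) (by omega), hzero]
    · rw [wx_getElem?_eq_two (by omega),
        wx_getElem?_copy 1 (j := x.length - k + 1) (by omega) (by omega) (by omega), hb]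
  omega

theorem not_hasPeriod_wx_of_gt (hsf : SqFree (wx x)) (hx : x ≠ []) {q : ℕ}
    (hq₁ : 3 * x.length + 6 < q) (hq₂ : q < 4 * x.length + 4) : ¬ HasPeriod (wx x) q := by
  intro h
  have h9 := nine_le_length hsf hx
  obtain ⟨k, rfl⟩ : ∃ k, q = 3 * x.length + 6 + k := ⟨q - (3 * x.length + 6), by omega⟩
  obtain ⟨hshift, hzero⟩ := getElem?_of_hasPeriod_wx (by omega) (by omega) h
  rcases (by omega : k = 1 ∨ k = 2 ∨ k = x.length - 3 ∨ (3 ≤ k ∧ k + 4 ≤ x.length))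
    with rfl | rfl | hk | ⟨hk₃, hk₄⟩
  · simp [x_getElem?_last hsf (by omega)] at hzero
  · simp [x_getElem?_sub_two hsf (by omega)] at hzero
  · have := hshift 0 (by omega)
    rw [zero_add, hk, x_getElem?_sub_three hsf (by omega), x_getElem?_zero hsf (by omega)] at this
    simp at this
  · exact not_getElem?_shift hsf hk₃ hk₄ hzero hshift

theorem per_wx (hsf : SqFree (wx x)) (hx : x ≠ []) : per (wx x) = 4 * x.length + 4 := by
  have h9 := nine_le_length hsf hx
  refine per_eq (hasPeriod_wx hsf (by omega)) fun q hq hper => ?_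
  have hq₀ := hper.1
  rcases (by omega : q ≤ 2 * x.length + 4 ∨
      (2 * x.length + 4 < q ∧ q ≤ 3 * x.length + 6) ∨ 3 * x.length + 6 < q)
    with hq' | ⟨hq₁, hq₂⟩ | hq'
  · exact hsf.not_isLocalPeriod (hper.isLocalPeriod q) le_rfl (by rw [length_wx]; omega)
  · refine hsf.not_forall_getElem?_eq (a := 2 * x.length + 4) (d := q - (2 * x.length + 4))
      (by omega) (by rw [length_wx]; omega) fun s hs => ?_
    rw [add_comm _ s, wx_getElem?_add_half (by omega), hper.2 s (by rw [length_wx]; omega)]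
    congr 1; omega
  · exact not_hasPeriod_wx_of_gt hsf hx hq' hq hper

end Period

section CriticalPositions

variable {x : Word}

theorem eq_of_occursAt_wx {t : ℕ} (hsf : SqFree (wx x)) (hx : x ≠ [])
    (h : OccursAt (wx x) x t) : ∃ k < 4, t = 1 + k * (x.length + 2) := by
  have hend := h.add_length_le hx
  rw [length_wx] at hend
  obtain ⟨k, hk, h₁, h₂⟩ : ∃ k < 4,
      t ≤ 1 + k * (x.length + 2) + x.length ∧ 1 + k * (x.length + 2) ≤ t + x.length := by
    have := List.length_pos_iff.mpr hx
    rcases (by omega : t ≤ x.length + 1 ∨ (x.length + 1 < t ∧ t ≤ 2 * x.length + 3) ∨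
        (2 * x.length + 3 < t ∧ t ≤ 3 * x.length + 5) ∨ 3 * x.length + 5 < t)
      with h' | h' | h' | h'
    exacts [⟨0, by omega, by omega, by omega⟩, ⟨1, by omega, by omega, by omega⟩,
      ⟨2, by omega, by omega, by omega⟩, ⟨3, by omega, by omega, by omega⟩]
  exact ⟨k, hk, hsf.eq_of_occursAt h (occursAt_wx k hk) hx h₁ h₂⟩

theorem not_isLocalPeriod_wx_of_lt (hsf : SqFree (wx x)) (hx : x ≠ []) {p m : ℕ}
    (hp : 2 * x.length + 4 ≤ p) (hp' : p ≤ 3 * x.length + 6) (h : IsLocalPeriod (wx x) p m)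
    (hmp : m < p) (hlen : (wx x).length < p + m) : False := by
  rw [length_wx] at hlen
  have hm := h.1
  -- shifting back by `m` sends the last copy of `x` to another copy; only the second one is
  -- compatible with the bounds on `m`, and then the `1` at `2|x| + 3` would meet the final `0`
  obtain ⟨k, hk, ht⟩ := eq_of_occursAt_wx hsf hx
    (h.occursAt_sub (occursAt_wx 3 (by omega)) (by omega) (by omega) (by omega)
      (by rw [length_wx]; omega))
  obtain rfl : k = 1 := by interval_cases k <;> omega
  have := h.2 (2 * x.length + 3) (by omega) (by omega) (by rw [length_wx]; omega)
  rw [wx_getElem?_eq_one rfl, wx_getElem?_eq_zero (by omega)] at this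
  simp at this

theorem le_of_isLocalPeriod_wx (hsf : SqFree (wx x)) (hx : x ≠ []) {p m : ℕ}
    (hp : 2 * x.length + 4 ≤ p) (hp' : p ≤ 3 * x.length + 6) (h : IsLocalPeriod (wx x) p m) :
    4 * x.length + 4 ≤ m := by
  have hlen := length_wx x
  rcases (by omega : (m ≤ p ∧ p + m ≤ (wx x).length) ∨
      (p ≤ m ∧ (wx x).length ≤ p + m) ∨ (m < p ∧ (wx x).length < p + m))
    with ⟨h₁, h₂⟩ | ⟨h₁, h₂⟩ | ⟨h₁, h₂⟩
  · exact (hsf.not_isLocalPeriod h h₁ h₂).elim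
  · exact per_wx hsf hx ▸ Nat.sInf_le (h.hasPeriod h₁ h₂)
  · exact (not_isLocalPeriod_wx_of_lt hsf hx hp hp' h h₁ h₂).elim

theorem isCritical_wx_iff (hsf : SqFree (wx x)) (hx : x ≠ []) {p : ℕ} (hp : IsPos (wx x) p) :
    IsCritical (wx x) p ↔ 2 * x.length + 4 ≤ p ∧ p ≤ 3 * x.length + 6 := by
  rw [isCritical_iff hp, per_wx hsf hx]
  refine ⟨fun h => ?_, fun ⟨h₁, h₂⟩ m hm => le_of_isLocalPeriod_wx hsf hx h₁ h₂ hm⟩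
  by_contra hout
  have := List.length_pos_iff.mpr hx
  rcases (by omega : p ≤ 2 * x.length + 3 ∨ 3 * x.length + 7 ≤ p) with hp' | hp'
  · have := h _ (isLocalPeriod_wx_of_le hp'); omega
  · have := h _ (isLocalPeriod_wx_of_ge hp'); omega

end CriticalPositions

end CritFact

/-- if `x` is nonempty and `w_x = 0x02x10x02x0` is square-free, then the
critical points of `w_x` are exactly the positions `2|x|+4 ≤ p ≤ 3|x|+6`, so
`η(w_x) = |x| + 3` and `η(w_x)/|w_x| = (|x|+3)/(4|x|+8) = 1/4 + 1/|w_x|`. -/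
theorem wx_critical_points (x : CritFact.Word) (hx : x ≠ [])
    (hsf : CritFact.SqFree (CritFact.wx x)) :
    (∀ p : ℕ, CritFact.IsPos (CritFact.wx x) p →
      (CritFact.IsCritical (CritFact.wx x) p ↔
        2 * x.length + 4 ≤ p ∧ p ≤ 3 * x.length + 6)) ∧
    CritFact.eta (CritFact.wx x) = x.length + 3 ∧
    (CritFact.eta (CritFact.wx x) : ℝ) / ((CritFact.wx x).length : ℝ)
      = ((x.length : ℝ) + 3) / (4 * (x.length : ℝ) + 8) ∧
    (CritFact.eta (CritFact.wx x) : ℝ) / ((CritFact.wx x).length : ℝ)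
      = 1 / 4 + 1 / ((CritFact.wx x).length : ℝ) := by
  have hcrit := fun p (hp : CritFact.IsPos (CritFact.wx x) p) =>
    CritFact.isCritical_wx_iff hsf hx hp
  have heta : CritFact.eta (CritFact.wx x) = x.length + 3 := by
    rw [CritFact.eta_eq_of_isCritical_iff hcrit (by omega) (by rw [CritFact.length_wx]; omega)]
    omega
  refine ⟨hcrit, heta, ?_, ?_⟩ <;> rw [heta, CritFact.length_wx] <;> push_cast
  · ring
  · field_simp
    ring
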